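/- If a group G acts properly by automorphisms on a space with walls (X, W) such that the wall pseudo-metric is proper (i.e. for some basepoint x, the number of walls separating x from g·x tends to infinity as g leaves finite subsets), then G has the Haagerup property. -/

import Mathlib

/-!
A point `x` determines the indicator `χₓ` of the walls having `x` on their `true` side. The
difference `χ_y - χ_x` is supported on the walls separating `x` and `y`, with values `±1`, so it
lies in `ℓ²(W)` and its squared norm is the number of such walls. Hence `g ↦ χ_{g x₀} - χ_{x₀}`
is a cocycle for the permutation representation of `G` on `ℓ²(W)`; the affine isometric action it
defines is proper exactly because the wall pseudo-metric is.
-/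

open Set

/-- The Haagerup property: the group admits a proper affine isometric action on a
real Hilbert space. -/
def HasHaagerupProperty (G : Type*) [Group G] : Prop :=
  ∃ (H : Type) (_ : NormedAddCommGroup H) (_ : InnerProductSpace ℝ H) (_ : CompleteSpace H)
    (α : G → H → H),
    (∀ g, Isometry (α g)) ∧
    (∀ g h x, α (g * h) x = α g (α h x)) ∧
    (∀ x, α 1 x = x) ∧
    (∀ M : ℝ, {g : G | dist (α g 0) 0 ≤ M}.Finite)

open scoped ENNReal

section PermutationRepresentation

variable {ι κ E : Type*} [NormedAddCommGroup E] {p : ℝ≥0∞}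

theorem Memℓp.comp_equiv {f : κ → E} (hf : Memℓp f p) (e : ι ≃ κ) : Memℓp (f ∘ e) p := by
  rcases p.trichotomy with rfl | rfl | hp
  · exact memℓp_zero (hf.finite_dsupport.preimage e.injective.injOn)
  · rw [memℓp_infty_iff] at hf ⊢
    rwa [← e.surjective.range_comp fun k => ‖f k‖] at hf
  · rw [memℓp_gen_iff hp] at hf ⊢
    exact (e.summable_iff (f := fun k => ‖f k‖ ^ p.toReal)).mpr hf

theorem lp.norm_eq_of_comp_equiv {f : lp (fun _ : κ => E) p} {g : lp (fun _ : ι => E) p}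
    (e : ι ≃ κ) (hgf : ∀ i, g i = f (e i)) : ‖g‖ = ‖f‖ := by
  rcases p.trichotomy with rfl | rfl | hp
  · have hsupp : {i | g i ≠ 0} = e ⁻¹' {k | f k ≠ 0} := by ext; simp [hgf]
    rw [lp.norm_eq_card_dsupport, lp.norm_eq_card_dsupport,
      ← ncard_eq_toFinset_card _ (lp.memℓp g).finite_dsupport,
      ← ncard_eq_toFinset_card _ (lp.memℓp f).finite_dsupport, hsupp,
      ncard_preimage_of_injective_subset_range e.injective (by simp)]
  · simp only [lp.norm_eq_ciSup, hgf, e.iSup_comp (g := fun k => ‖f k‖)]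
  · simp only [lp.norm_eq_tsum_rpow hp, hgf, e.tsum_eq (f := fun k => ‖f k‖ ^ p.toReal)]

variable (𝕜 : Type*) [NormedField 𝕜] [NormedSpace 𝕜 E] [Fact (1 ≤ p)]

def lp.compEquiv (e : ι ≃ κ) : lp (fun _ : κ => E) p ≃ₗᵢ[𝕜] lp (fun _ : ι => E) p where
  toFun f := ⟨f ∘ e, (lp.memℓp f).comp_equiv e⟩
  invFun g := ⟨g ∘ e.symm, (lp.memℓp g).comp_equiv e.symm⟩
  map_add' _ _ := rfl
  map_smul' _ _ := rfl
  left_inv f := lp.ext <| funext fun k => congrArg f (e.apply_symm_apply k)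
  right_inv g := lp.ext <| funext fun i => congrArg g (e.symm_apply_apply i)
  norm_map' _ := lp.norm_eq_of_comp_equiv e fun _ => rfl

def lp.permHom : Equiv.Perm ι →* (lp (fun _ : ι => E) p ≃ₗᵢ[𝕜] lp (fun _ : ι => E) p) where
  toFun e := lp.compEquiv 𝕜 e.symm
  map_one' := rfl
  map_mul' _ _ := rfl

@[simp]
theorem lp.permHom_apply (e : Equiv.Perm ι) (f : lp (fun _ : ι => E) p) (i : ι) :
    lp.permHom 𝕜 e f i = f (e.symm i) :=
  rfl

end PermutationRepresentation

theorem hasHaagerupProperty_of_proper_cocycle {G H : Type} [Group G] [NormedAddCommGroup H]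
    [InnerProductSpace ℝ H] [CompleteSpace H] (σ : G →* (H ≃ₗᵢ[ℝ] H)) (b : G → H)
    (hb : ∀ g h, b (g * h) = b g + σ g (b h)) (hproper : ∀ M : ℝ, {g | ‖b g‖ ≤ M}.Finite) :
    HasHaagerupProperty G := by
  have hb_one : b 1 = 0 := by simpa using hb 1 1
  refine ⟨H, inferInstance, inferInstance, inferInstance, fun g v => σ g v + b g,
    fun g => (IsometryEquiv.addRight (b g)).isometry.comp (σ g).isometry, fun g h v => ?_,
    fun v => by simp [hb_one], fun M => by simpa using hproper M⟩
  simp only [map_mul, LinearIsometryEquiv.coe_mul, Function.comp_apply, hb, map_add]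
  abel

section SpaceWithWalls

variable {X Wl : Type*} (side : Wl → X → Bool)

def sideIndicator (x : X) (w : Wl) : ℝ := if side w x then 1 else 0

theorem norm_sideIndicator_sub_sq (x y : X) (w : Wl) :
    ‖sideIndicator side y w - sideIndicator side x w‖ ^ 2 =
      {w | side w x ≠ side w y}.indicator 1 w := by
  simp only [sideIndicator, indicator_apply, mem_ofPred_eq, Pi.one_apply]
  cases side w x <;> cases side w y <;> norm_num

variable (hfin : ∀ x y : X, {w : Wl | side w x ≠ side w y}.Finite)

def separationVector (x y : X) : lp (fun _ : Wl => ℝ) 2 :=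
  ⟨sideIndicator side y - sideIndicator side x, by
    refine (memℓp_zero ((hfin x y).subset fun w hw => by_contra fun h => hw ?_)).of_exponent_ge
      bot_le
    simp [sideIndicator, of_not_not h]⟩

@[simp]
theorem separationVector_apply (x y : X) (w : Wl) :
    separationVector side hfin x y w = sideIndicator side y w - sideIndicator side x w :=
  rfl

theorem separationVector_add (x y z : X) :
    separationVector side hfin x y + separationVector side hfin y z =
      separationVector side hfin x z :=
  lp.ext <| funext fun w => by simp

theorem permHom_separationVector {e : Equiv.Perm Wl} {f : Equiv.Perm X}
    (hef : ∀ w x, side (e w) (f x) = side w x) (x y : X) :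
    lp.permHom ℝ e (separationVector side hfin x y) = separationVector side hfin (f x) (f y) :=
  lp.ext <| funext fun w => by
    simp [sideIndicator, ← hef (e.symm w)]

theorem norm_separationVector_sq (x y : X) :
    ‖separationVector side hfin x y‖ ^ 2 = {w | side w x ≠ side w y}.ncard := by
  have h := lp.norm_rpow_eq_tsum (p := 2) (by norm_num) (separationVector side hfin x y)
  simp only [ENNReal.toReal_ofNat, Real.rpow_two, separationVector_apply,
    norm_sideIndicator_sub_sq] at h
  rw [h, ← tsum_subtype, ← (hfin x y).coe_toFinset, ncard_coe_finset]
  simp [tsum_fintype]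

end SpaceWithWalls

theorem haagerup_of_proper_action_on_space_with_walls_general
    {G : Type} [Group G] {X Wl : Type} (side : Wl → X → Bool)
    (hfin : ∀ x y : X, {w : Wl | side w x ≠ side w y}.Finite)
    (ρ : G →* Equiv.Perm X) (π : G →* Equiv.Perm Wl)
    (hcompat : ∀ (g : G) (w : Wl) (x : X), side (π g w) (ρ g x) = side w x)
    (x₀ : X)
    (hproper : ∀ n : ℕ, {g : G | {w : Wl | side w x₀ ≠ side w (ρ g x₀)}.ncard ≤ n}.Finite) :
    HasHaagerupProperty G := by
  let v := separationVector side hfin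
  refine hasHaagerupProperty_of_proper_cocycle ((lp.permHom ℝ).comp π) (fun g => v x₀ (ρ g x₀))
    (fun g h => ?_) (fun M => (hproper ⌈M ^ 2⌉₊).subset fun g hg => ?_)
  · rw [MonoidHom.comp_apply, permHom_separationVector side hfin (hcompat g), map_mul,
      Equiv.Perm.mul_apply, separationVector_add]
  · have hM : ‖v x₀ (ρ g x₀)‖ ^ 2 ≤ M ^ 2 := pow_le_pow_left₀ (norm_nonneg _) hg 2
    rw [norm_separationVector_sq] at hM
    exact_mod_cast hM.trans (Nat.le_ceil _)

/-- If a countable group acts by automorphisms on a space with walls so that the wall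
pseudo-metric is proper, then it has the Haagerup property.  Walls are encoded by a type
`Wl` together with a two-sided labelling `side : Wl → X → Bool`; a wall `w` separates `x`
and `y` iff `side w x ≠ side w y`. -/
theorem haagerup_of_proper_action_on_space_with_walls
    {G : Type} [Group G] [Countable G] {X Wl : Type} (side : Wl → X → Bool)
    (hne : ∀ w : Wl, (∃ x, side w x = true) ∧ (∃ x, side w x = false))
    (hfin : ∀ x y : X, {w : Wl | side w x ≠ side w y}.Finite)
    (ρ : G →* Equiv.Perm X) (π : G →* Equiv.Perm Wl)
    (hcompat : ∀ (g : G) (w : Wl) (x : X), side (π g w) (ρ g x) = side w x)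
    (x₀ : X)
    (hproper : ∀ n : ℕ, {g : G | {w : Wl | side w x₀ ≠ side w (ρ g x₀)}.ncard ≤ n}.Finite) :
    HasHaagerupProperty G :=
  haagerup_of_proper_action_on_space_with_walls_general side hfin ρ π hcompat x₀ hproper
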